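/- Picard's reduction: Let Q = (V_Q, E_Q) be a finite directed graph with vertex weights ζ : V_Q → ℝ. Construct the network Q̂ by adding a source s with an arc (s, v) of capacity ζ(v) for each v with ζ(v) > 0, a sink t with an arc (u, t) of capacity |ζ(u)| for each u with ζ(u) < 0, and giving every original arc infinite capacity. Then for every closed set X ⊆ V_Q (no arc from V_Q \ X into X), the s–t cut δ((V_Q \ X) ∪ {s}) has finite capacity equal to ζ(X) − ζ(V⁻), where V⁻ = {u : ζ(u) < 0}; consequently X is a minimum-weight closed set iff the corresponding cut has minimum capacity among all finite-capacity s–t cuts. -/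
import Mathlib


open scoped ENNReal

variable {V : Type} [Fintype V] [DecidableEq V]

/-- `X` is a closed set (ideal) of the digraph with arc set `A`:
no arc goes from the complement of `X` into `X`. -/
def ClosedSet (A : Finset (V × V)) (X : Finset V) : Prop :=
  ∀ a ∈ A, a.2 ∈ X → a.1 ∈ X

/-- Vertices of the network `Q̂`: the original vertices `Sum.inl v`, the
source `s = Sum.inr false` and the sink `t = Sum.inr true`. -/
abbrev HatV (V : Type) := V ⊕ Bool

/-- Capacities of the network `Q̂`: an arc `(s, v)` of capacity `ζ v` for each
`v` with `ζ v > 0`, an arc `(u, t)` of capacity `|ζ u|` for each `u` with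
`ζ u < 0`, and infinite capacity on every original arc; all other pairs carry
zero capacity (no arc). -/
noncomputable def hatCap (A : Finset (V × V)) (ζ : V → ℝ) :
    HatV V → HatV V → ℝ≥0∞
  | Sum.inr false, Sum.inl v => if 0 < ζ v then ENNReal.ofReal (ζ v) else 0
  | Sum.inl u, Sum.inr true => if ζ u < 0 then ENNReal.ofReal |ζ u| else 0
  | Sum.inl u, Sum.inl v => if (u, v) ∈ A then ⊤ else 0
  | _, _ => 0

/-- The capacity of the `s`–`t` cut `δ(S)`: total capacity of arcs leaving `S`. -/
noncomputable def cutCap (A : Finset (V × V)) (ζ : V → ℝ)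
    (S : Finset (HatV V)) : ℝ≥0∞ :=
  ∑ u ∈ S, ∑ v ∈ Sᶜ, hatCap A ζ u v

/-- The cut corresponding to a closed set `X`: `S = (V \ X) ∪ {s}`. -/
def cutOf (X : Finset V) : Finset (HatV V) :=
  insert (Sum.inr false) ((Finset.univ \ X).image Sum.inl)

open Classical

lemma s_mem_cutOf (X : Finset V) : (Sum.inr false : HatV V) ∈ cutOf X := by
  simp [cutOf]

lemma t_notMem_cutOf (X : Finset V) : (Sum.inr true : HatV V) ∉ cutOf X := by
  simp [cutOf]

lemma compl_cutOf (X : Finset V) :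
    (cutOf X)ᶜ = insert (Sum.inr true : HatV V) (X.image Sum.inl) := by
  ext x
  cases x with
  | inl v => simp [cutOf]
  | inr b => cases b <;> simp [cutOf]

lemma weight_sub_nonneg (ζ : V → ℝ) (Y : Finset V) :
    0 ≤ (∑ v ∈ Y, ζ v) - ∑ v ∈ Finset.univ.filter (fun v => ζ v < 0), ζ v := by
  classical
  have h1 : (Y.filter (fun v => ζ v < 0)) ⊆ Finset.univ.filter (fun v => ζ v < 0) := by
    intro v hv; simp_all [Finset.mem_filter]
  have h2 : ∑ v ∈ Finset.univ.filter (fun v => ζ v < 0), ζ v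
      ≤ ∑ v ∈ Y.filter (fun v => ζ v < 0), ζ v := by
    rw [← Finset.sum_sdiff h1]
    have : ∑ v ∈ Finset.univ.filter (fun v => ζ v < 0) \ Y.filter (fun v => ζ v < 0), ζ v ≤ 0 :=
      Finset.sum_nonpos (fun v hv => by
        have := (Finset.mem_sdiff.mp hv).1
        simp only [Finset.mem_filter] at this
        linarith [this.2])
    linarith
  have h3 : ∑ v ∈ Y.filter (fun v => ζ v < 0), ζ v ≤ ∑ v ∈ Y, ζ v := by
    apply Finset.sum_le_sum_of_subset_of_nonneg (Finset.filter_subset _ _)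
    intro v hv hnv
    simp only [Finset.mem_filter, hv, true_and] at hnv
    linarith [not_lt.mp hnv]
  linarith

lemma cutCap_cutOf (A : Finset (V × V)) (ζ : V → ℝ) (Y : Finset V)
    (hY : ClosedSet A Y) :
    cutCap A ζ (cutOf Y) =
      ENNReal.ofReal ((∑ v ∈ Y, ζ v) -
        ∑ v ∈ Finset.univ.filter (fun v => ζ v < 0), ζ v) := by
  classical
  have hs : (Sum.inr false : HatV V) ∉ (Finset.univ \ Y).image Sum.inl := by simp
  have ht : (Sum.inr true : HatV V) ∉ Y.image Sum.inl := by simp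
  have hss : hatCap A ζ (Sum.inr false) (Sum.inr true) = 0 := rfl
  have h1 : ∀ w ∈ Y, hatCap A ζ (Sum.inr false) (Sum.inl w)
      = ENNReal.ofReal (max (ζ w) 0) := by
    intro w _
    show (if 0 < ζ w then ENNReal.ofReal (ζ w) else 0) = _
    split
    · rw [max_eq_left (by linarith)]
    · rw [max_eq_right (by linarith [not_lt.mp ‹¬ 0 < ζ w›]), ENNReal.ofReal_zero]
  have h3 : ∀ u ∈ Finset.univ \ Y,
      (hatCap A ζ (Sum.inl u) (Sum.inr true) +
        ∑ w ∈ Y, hatCap A ζ (Sum.inl u) (Sum.inl w))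
      = ENNReal.ofReal (max (-ζ u) 0) := by
    intro u hu
    have hin : ∑ w ∈ Y, hatCap A ζ (Sum.inl u) (Sum.inl w) = 0 := by
      apply Finset.sum_eq_zero
      intro w hw
      show (if (u, w) ∈ A then (⊤ : ℝ≥0∞) else 0) = 0
      rw [if_neg]
      intro hA
      have := hY (u, w) hA hw
      simp [Finset.mem_sdiff] at hu
      exact hu this
    rw [hin, add_zero]
    show (if ζ u < 0 then ENNReal.ofReal |ζ u| else 0) = _
    split
    · rw [abs_of_neg ‹ζ u < 0›, max_eq_left (by linarith)]
    · rw [max_eq_right (by linarith [not_lt.mp ‹¬ ζ u < 0›]), ENNReal.ofReal_zero]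
  have step : cutCap A ζ (cutOf Y)
      = ∑ w ∈ Y, ENNReal.ofReal (max (ζ w) 0)
        + ∑ u ∈ Finset.univ \ Y, ENNReal.ofReal (max (-ζ u) 0) := by
    rw [cutCap, compl_cutOf, cutOf, Finset.sum_insert hs,
      Finset.sum_image (fun a _ b _ h => Sum.inl_injective h)]
    congr 1
    · rw [Finset.sum_insert ht,
        Finset.sum_image (fun a _ b _ h => Sum.inl_injective h), hss, zero_add]
      exact Finset.sum_congr rfl h1
    · apply Finset.sum_congr rfl
      intro u hu
      rw [Finset.sum_insert ht,
        Finset.sum_image (fun a _ b _ h => Sum.inl_injective h)]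
      exact h3 u hu
  rw [step]
  rw [← ENNReal.ofReal_sum_of_nonneg (fun w _ => le_max_right _ _),
      ← ENNReal.ofReal_sum_of_nonneg (fun u _ => le_max_right _ _),
      ← ENNReal.ofReal_add (Finset.sum_nonneg fun w _ => le_max_right _ _)
        (Finset.sum_nonneg fun u _ => le_max_right _ _)]
  congr 1
  have key : ∀ a : ℝ, max a 0 = a + max (-a) 0 := by
    intro a
    rcases le_total a 0 with h | h
    · rw [max_eq_right h, max_eq_left (by linarith)]; ring
    · rw [max_eq_left h, max_eq_right (by linarith)]; ring
  have e1 : ∑ w ∈ Y, max (ζ w) 0 = ∑ w ∈ Y, ζ w + ∑ w ∈ Y, max (-ζ w) 0 := by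
    rw [← Finset.sum_add_distrib]
    exact Finset.sum_congr rfl fun w _ => key (ζ w)
  have e2 : ∑ w ∈ Y, max (-ζ w) 0 + ∑ u ∈ Finset.univ \ Y, max (-ζ u) 0
      = ∑ v ∈ Finset.univ, max (-ζ v) 0 := by
    rw [← Finset.compl_eq_univ_sdiff, Finset.sum_add_sum_compl]
  have e3 : ∑ v ∈ Finset.univ, max (-ζ v) 0
      = -∑ v ∈ Finset.univ.filter (fun v => ζ v < 0), ζ v := by
    rw [← Finset.sum_neg_distrib, Finset.sum_filter]
    apply Finset.sum_congr rfl
    intro v _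
    rcases lt_or_ge (ζ v) 0 with h | h
    · rw [if_pos h, max_eq_left (by linarith)]
    · rw [if_neg (not_lt.mpr h), max_eq_right (by linarith)]
  linarith

lemma exists_closed_of_cut (A : Finset (V × V)) (ζ : V → ℝ)
    (S : Finset (HatV V)) (hsS : Sum.inr false ∈ S) (htS : Sum.inr true ∉ S)
    (hfin : cutCap A ζ S ≠ ⊤) :
    ∃ Y : Finset V, ClosedSet A Y ∧ S = cutOf Y := by
  classical
  refine ⟨Finset.univ.filter (fun v => Sum.inl v ∉ S), ?_, ?_⟩
  · intro a ha h2
    simp only [Finset.mem_filter, Finset.mem_univ, true_and] at h2 ⊢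
    intro h1
    apply hfin
    rw [cutCap, ENNReal.sum_eq_top]
    refine ⟨Sum.inl a.1, h1, ?_⟩
    rw [ENNReal.sum_eq_top]
    refine ⟨Sum.inl a.2, Finset.mem_compl.mpr h2, ?_⟩
    show (if (a.1, a.2) ∈ A then (⊤ : ℝ≥0∞) else 0) = ⊤
    rw [if_pos (by rwa [Prod.mk.eta])]
  · ext x
    cases x with
    | inl v => simp [cutOf]
    | inr b => cases b <;> simp [cutOf, hsS, htS]

open Classical in
/-- Picard's reduction: for every closed set `X` of `(Q, ζ)`,
the `s`–`t` cut `δ((V \ X) ∪ {s})` has finite capacity equal to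
`ζ(X) − ζ(V⁻)`, and `X` has minimum weight among closed sets iff the
corresponding cut has minimum capacity among all finite-capacity `s`–`t` cuts. -/
theorem picard_reduction (A : Finset (V × V)) (ζ : V → ℝ)
    (X : Finset V) (hX : ClosedSet A X) :
    cutCap A ζ (cutOf X) =
      ENNReal.ofReal ((∑ v ∈ X, ζ v) -
        ∑ v ∈ Finset.univ.filter (fun v => ζ v < 0), ζ v) ∧
    ((∀ Y : Finset V, ClosedSet A Y → ∑ v ∈ X, ζ v ≤ ∑ v ∈ Y, ζ v) ↔
      (∀ S : Finset (HatV V), Sum.inr false ∈ S → Sum.inr true ∉ S →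
        cutCap A ζ S ≠ ⊤ → cutCap A ζ (cutOf X) ≤ cutCap A ζ S)) := by
  classical
  have hmain := cutCap_cutOf A ζ X hX
  refine ⟨hmain, ?_, ?_⟩
  · intro hmin S hsS htS hfin
    obtain ⟨Y, hYc, rfl⟩ := exists_closed_of_cut A ζ S hsS htS hfin
    rw [hmain, cutCap_cutOf A ζ Y hYc]
    exact ENNReal.ofReal_le_ofReal (by linarith [hmin Y hYc])
  · intro hcut Y hYc
    have h := hcut (cutOf Y) (s_mem_cutOf Y) (t_notMem_cutOf Y)
      (by rw [cutCap_cutOf A ζ Y hYc]; exact ENNReal.ofReal_ne_top)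
    rw [hmain, cutCap_cutOf A ζ Y hYc] at h
    have h2 := (ENNReal.ofReal_le_ofReal_iff (weight_sub_nonneg ζ Y)).mp h
    linarith
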